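/- arXiv:math/0603486 — 2 statements merged into one kernel-verified Lean document; each statement's English description precedes it below -/
import Mathlib

section
/- Let (M^m, g) be a closed Riemannian manifold with s_g > 0 (not necessarily constant) and n ≥ 1. Then Y(M × ℝⁿ, [g + g_E]) > 0, where Y(M × ℝⁿ, [g + g_E]) is the infimum over nonzero compactly supported smooth functions f on M × ℝⁿ of Q_{g+g_E}(f) = ∫ (a_{m+n} |∇f|² + s_g f²) dμ / ‖f‖_{p_{m+n}}². More precisely, Y(M × ℝⁿ, [g + g_E]) ≥ α/K₁ where α = min(a_{m+n}, min_M s_g) > 0 and K₁ is the constant in the Sobolev embedding ‖f‖_{p_{m+n}}² ≤ K₁ ‖f‖_{W^{1,2}}² for the complete manifold (M × ℝⁿ, g + g_E). -/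
open MeasureTheory

/-- Positivity of the Yamabe constant `Y(M × ℝⁿ, [g + g_E])`.  The complete
manifold `X = M × ℝⁿ` is formalized via its volume measure `μ`, the squared
gradient norm operator `gradSq`, the scalar curvature `s` of `g` (pulled back to
`X`) with `0 < smin ≤ s`, and the set `Cc` of nonzero compactly supported smooth
test functions.  Given the Sobolev embedding `‖f‖_p² ≤ K₁ ‖f‖_{W^{1,2}}²`
(hypothesis `hSob`), the Yamabe constant `Y`, defined as the infimum over `Cc` of
the Yamabe quotient `Q(f) = ∫ (a|∇f|² + s f²) dμ / ‖f‖_p²`, satisfies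
`Y ≥ α/K₁ > 0` where `α = min a smin`. -/
theorem yamabe_product_euclidean_pos {X : Type*} [MeasurableSpace X] (μ : Measure X)
    (m n : ℕ) (hm : 2 ≤ m) (hn : 1 ≤ n)
    (a p : ℝ) (ha : a = 4 * (((m + n : ℕ) : ℝ) - 1) / (((m + n : ℕ) : ℝ) - 2))
    (hp : p = 2 * ((m + n : ℕ) : ℝ) / (((m + n : ℕ) : ℝ) - 2))
    (s : X → ℝ) (smin : ℝ) (hsmin : ∀ x, smin ≤ s x) (hspos : 0 < smin)
    (gradSq : (X → ℝ) → X → ℝ) (hgradSq : ∀ f x, 0 ≤ gradSq f x)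
    (Cc : Set (X → ℝ)) (hne : Cc.Nonempty) (hCc0 : (fun _ : X => (0:ℝ)) ∉ Cc)
    (hnorm_pos : ∀ f ∈ Cc, 0 < (eLpNorm f (ENNReal.ofReal p) μ).toReal)
    (hint : ∀ f ∈ Cc, Integrable (fun x => gradSq f x) μ ∧
      Integrable (fun x => f x ^ 2) μ ∧ Integrable (fun x => s x * f x ^ 2) μ)
    (K1 : ℝ) (hK1 : 0 < K1)
    (hSob : ∀ f ∈ Cc, ((eLpNorm f (ENNReal.ofReal p) μ).toReal) ^ 2
      ≤ K1 * ∫ x, (gradSq f x + f x ^ 2) ∂μ)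
    (Y : ℝ)
    (hY : Y = sInf ((fun f => (∫ x, (a * gradSq f x + s x * f x ^ 2) ∂μ) /
      ((eLpNorm f (ENNReal.ofReal p) μ).toReal) ^ 2) '' Cc)) :
    min a smin / K1 ≤ Y ∧ 0 < Y := by

  have hk : (3:ℝ) ≤ ((m + n : ℕ) : ℝ) := by
    have : 3 ≤ m + n := by omega
    exact_mod_cast this
  have ha_pos : 0 < a := by
    rw [ha]
    have h1 : (0:ℝ) < ((m + n : ℕ) : ℝ) - 2 := by linarith
    have h2 : (0:ℝ) < 4 * (((m + n : ℕ) : ℝ) - 1) := by linarith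
    positivity
  set α := min a smin with hα
  have hαpos : 0 < α := lt_min ha_pos hspos
  have key : ∀ f ∈ Cc, α / K1 ≤
      (∫ x, (a * gradSq f x + s x * f x ^ 2) ∂μ) /
      ((eLpNorm f (ENNReal.ofReal p) μ).toReal) ^ 2 := by
    intro f hf
    obtain ⟨hg, hf2, hsf2⟩ := hint f hf
    have hN := hnorm_pos f hf
    set N := (eLpNorm f (ENNReal.ofReal p) μ).toReal
    have hmono : α * ∫ x, (gradSq f x + f x ^ 2) ∂μ ≤
        ∫ x, (a * gradSq f x + s x * f x ^ 2) ∂μ := by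
      rw [← integral_const_mul]
      apply integral_mono ((hg.add hf2).const_mul α) ((hg.const_mul a).add hsf2)
      intro x
      have h1 : α * gradSq f x ≤ a * gradSq f x :=
        mul_le_mul_of_nonneg_right (min_le_left _ _) (hgradSq f x)
      have h2 : α * f x ^ 2 ≤ s x * f x ^ 2 := by
        have : α ≤ s x := le_trans (min_le_right _ _) (hsmin x)
        exact mul_le_mul_of_nonneg_right this (sq_nonneg _)
      calc α * (gradSq f x + f x ^ 2) = α * gradSq f x + α * f x ^ 2 := by ring
        _ ≤ a * gradSq f x + s x * f x ^ 2 := add_le_add h1 h2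
    have hSob' := hSob f hf
    rw [div_le_div_iff₀ hK1 (by positivity : (0:ℝ) < N ^ 2)]
    calc α * N ^ 2 ≤ α * (K1 * ∫ x, (gradSq f x + f x ^ 2) ∂μ) :=
          mul_le_mul_of_nonneg_left hSob' hαpos.le
      _ = (α * ∫ x, (gradSq f x + f x ^ 2) ∂μ) * K1 := by ring
      _ ≤ (∫ x, (a * gradSq f x + s x * f x ^ 2) ∂μ) * K1 :=
          mul_le_mul_of_nonneg_right hmono hK1.le
  have hle : α / K1 ≤ Y := by
    rw [hY]
    apply le_csInf (hne.image _)
    rintro y ⟨f, hf, rfl⟩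
    exact key f hf
  exact ⟨hle, lt_of_lt_of_le (by positivity) hle⟩
end

section
/- Let m ≥ 2, n ≥ 2. If (M^m, g) has positive scalar curvature at some point, then the Riemannian product (M^m × ℝⁿ, g + g_E) is not locally conformally flat; moreover, the Weyl curvature of g + g_E does not vanish identically on any open subset of M × ℝⁿ. -/
open scoped RealInnerProductSpace

variable (m n : ℕ)

/-- The tangent space of the product `M × ℝⁿ` at a point, identified with
`ℝᵐ × ℝⁿ` via orthonormal coordinates. -/
abbrev ProdTangent (m n : ℕ) := EuclideanSpace ℝ (Fin m) × EuclideanSpace ℝ (Fin n)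

/-- The product metric `g + g_E` at the point. -/
noncomputable def prodMetric (x y : ProdTangent m n) : ℝ :=
  ⟪x.1, y.1⟫ + ⟪x.2, y.2⟫

/-- Orthonormal basis vectors tangent to the first factor. -/
noncomputable def e₁ (i : Fin m) : ProdTangent m n := (EuclideanSpace.single i 1, 0)

/-- Orthonormal basis vectors tangent to the second (Euclidean) factor. -/
noncomputable def e₂ (j : Fin n) : ProdTangent m n := (0, EuclideanSpace.single j 1)

/-- The Ricci tensor of a (0,4)-curvature tensor `R`, via the orthonormal basis. -/
noncomputable def ricci (R : ProdTangent m n → ProdTangent m n → ProdTangent m n →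
    ProdTangent m n → ℝ) (x y : ProdTangent m n) : ℝ :=
  (∑ i : Fin m, R (e₁ m n i) x (e₁ m n i) y) + ∑ j : Fin n, R (e₂ m n j) x (e₂ m n j) y

/-- The scalar curvature of a (0,4)-curvature tensor `R`. -/
noncomputable def scalarCurv (R : ProdTangent m n → ProdTangent m n → ProdTangent m n →
    ProdTangent m n → ℝ) : ℝ :=
  (∑ i : Fin m, ricci m n R (e₁ m n i) (e₁ m n i)) +
    ∑ j : Fin n, ricci m n R (e₂ m n j) (e₂ m n j)

/-- The Kulkarni–Nomizu product of two symmetric 2-tensors. -/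
noncomputable def kulkarniNomizu (A B : ProdTangent m n → ProdTangent m n → ℝ)
    (x y z w : ProdTangent m n) : ℝ :=
  A x z * B y w + A y w * B x z - A x w * B y z - A y z * B x w

/-- The Weyl tensor: the totally trace-free part of the curvature tensor `R`
(in dimension `k = m + n`). -/
noncomputable def weyl (R : ProdTangent m n → ProdTangent m n → ProdTangent m n →
    ProdTangent m n → ℝ) (x y z w : ProdTangent m n) : ℝ :=
  R x y z w
    - (1 / (((m + n : ℕ) : ℝ) - 2)) * kulkarniNomizu m n (ricci m n R) (prodMetric m n) x y z w
    + (scalarCurv m n R / (2 * (((m + n : ℕ) : ℝ) - 1) * (((m + n : ℕ) : ℝ) - 2))) *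
        kulkarniNomizu m n (prodMetric m n) (prodMetric m n) x y z w

/-- If `m, n ≥ 2` and `(Mᵐ, g)` has positive scalar curvature at a point, then the
Weyl curvature of the product metric `g + g_E` on `M × ℝⁿ` is nonzero at that
point; hence it does not vanish identically on any open set on which the scalar
curvature of `g` is positive, and the product is not locally conformally flat.
Here `R` is the curvature tensor of `g + g_E` at the point: since the second
factor is flat, `R((a,b),(c,d),(e,f),(g,h)) = R₁(a,c,e,g)` where `R₁` is the
curvature tensor of `g`, which vanishes when any argument is zero. -/
theorem weyl_ne_zero_of_scalar_pos (hm : 2 ≤ m) (hn : 2 ≤ n)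
    (R : ProdTangent m n → ProdTangent m n → ProdTangent m n → ProdTangent m n → ℝ)
    (R₁ : EuclideanSpace ℝ (Fin m) → EuclideanSpace ℝ (Fin m) →
      EuclideanSpace ℝ (Fin m) → EuclideanSpace ℝ (Fin m) → ℝ)
    (hR : ∀ x y z w : ProdTangent m n, R x y z w = R₁ x.1 y.1 z.1 w.1)
    (hR₁zero : ∀ a b c d : EuclideanSpace ℝ (Fin m),
      a = 0 ∨ b = 0 ∨ c = 0 ∨ d = 0 → R₁ a b c d = 0)
    (hscal : 0 < scalarCurv m n R) :
    ∃ x y z w : ProdTangent m n, weyl m n R x y z w ≠ 0 := by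
  classical
  set j : Fin n := ⟨0, by omega⟩ with hj
  set k : Fin n := ⟨1, by omega⟩ with hk
  have hjk : j ≠ k := by simp [hj, hk, Fin.ext_iff]
  -- ricci vanishes when second argument has zero first component
  have hric : ∀ v w : ProdTangent m n, v.1 = 0 → ricci m n R v w = 0 := by
    intro v w hv
    unfold ricci
    have h1 : ∀ i : Fin m, R (e₁ m n i) v (e₁ m n i) w = 0 := by
      intro i
      rw [hR]
      exact hR₁zero _ _ _ _ (Or.inr (Or.inl hv))
    have h2 : ∀ a : Fin n, R (e₂ m n a) v (e₂ m n a) w = 0 := by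
      intro a
      rw [hR]
      exact hR₁zero _ _ _ _ (Or.inr (Or.inl hv))
    simp [h1, h2]
  have he₂1 : ∀ a : Fin n, (e₂ m n a).1 = 0 := fun a => rfl
  -- metric values
  have hg : ∀ a b : Fin n, prodMetric m n (e₂ m n a) (e₂ m n b) = if a = b then 1 else 0 := by
    intro a b
    unfold prodMetric e₂
    simp [EuclideanSpace.inner_single_left, EuclideanSpace.single_apply, eq_comm]
  refine ⟨e₂ m n j, e₂ m n k, e₂ m n j, e₂ m n k, ?_⟩
  have hR0 : R (e₂ m n j) (e₂ m n k) (e₂ m n j) (e₂ m n k) = 0 := by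
    rw [hR]; exact hR₁zero _ _ _ _ (Or.inl rfl)
  have hkn1 : kulkarniNomizu m n (ricci m n R) (prodMetric m n)
      (e₂ m n j) (e₂ m n k) (e₂ m n j) (e₂ m n k) = 0 := by
    unfold kulkarniNomizu
    rw [hric _ _ (he₂1 j), hric _ _ (he₂1 k), hric _ _ (he₂1 j), hric _ _ (he₂1 k)]
    ring
  have hkn2 : kulkarniNomizu m n (prodMetric m n) (prodMetric m n)
      (e₂ m n j) (e₂ m n k) (e₂ m n j) (e₂ m n k) = 2 := by
    unfold kulkarniNomizu
    rw [hg j j, hg k k, hg j k, hg k j]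
    simp [hjk, hjk.symm]
    norm_num
  have hmn : (4 : ℝ) ≤ ((m + n : ℕ) : ℝ) := by
    have : (4 : ℕ) ≤ m + n := by omega
    exact_mod_cast this
  unfold weyl
  rw [hR0, hkn1, hkn2]
  have h1 : (0:ℝ) < ((m + n : ℕ) : ℝ) - 1 := by linarith
  have h2 : (0:ℝ) < ((m + n : ℕ) : ℝ) - 2 := by linarith
  have : 0 < scalarCurv m n R / (2 * (((m + n : ℕ) : ℝ) - 1) * (((m + n : ℕ) : ℝ) - 2)) * 2 := by
    positivity
  intro h
  rw [mul_zero, sub_zero, zero_add] at h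
  linarith
end
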